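/- arXiv:0811.4706 — 8 statements merged into one kernel-verified Lean document; each statement's English description precedes it below -/
import Mathlib

section
/- For every vector c = (c₁,…,c_N) of nonnegative reals with Σ_k cₖ > 0, all indices i ≠ j with cᵢ > cⱼ, and every α with 0 < α < (cᵢ − cⱼ)/2, the Robin Hood operation strictly decreases the ratio ℓ²/ℓ¹: √(Σ_{k≠i,j} cₖ² + (cᵢ − α)² + (cⱼ + α)²) / (Σ_k cₖ) < √(Σ_k cₖ²) / (Σ_k cₖ). Hence the measure S(c) = √(Σ_k cₖ²)/Σ_k cₖ satisfies D1 (Robin Hood). -/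
/-!
Moving `α` from `cᵢ` to `cⱼ` leaves the ℓ¹ sum unchanged and changes the sum of squares by
`2α(α - (cᵢ - cⱼ)) < 0`; since `√` is strictly monotone, the ratio strictly decreases.
-/

open Finset

theorem sub_sq_add_add_sq_lt {a b α : ℝ} (hα0 : 0 < α) (hα : α < a - b) :
    (a - α) ^ 2 + (b + α) ^ 2 < a ^ 2 + b ^ 2 := by
  have key : (a - α) ^ 2 + (b + α) ^ 2 = a ^ 2 + b ^ 2 + 2 * α * (α - (a - b)) := by ring
  rw [key]
  nlinarith

theorem sum_compl_pair_add {ι M : Type*} [Fintype ι] [DecidableEq ι] [AddCommMonoid M]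
    (f : ι → M) {i j : ι} (hij : i ≠ j) :
    ∑ k ∈ ({i, j}ᶜ : Finset ι), f k + (f i + f j) = ∑ k, f k := by
  rw [← sum_pair hij, sum_compl_add_sum]

theorem sum_sq_robinHood_lt {ι : Type*} [Fintype ι] [DecidableEq ι] (c : ι → ℝ) {i j : ι}
    (hij : i ≠ j) {α : ℝ} (hα0 : 0 < α) (hα : α < c i - c j) :
    ∑ k ∈ ({i, j}ᶜ : Finset ι), c k ^ 2 + (c i - α) ^ 2 + (c j + α) ^ 2 < ∑ k, c k ^ 2 := by
  rw [← sum_compl_pair_add (c · ^ 2) hij, add_assoc]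
  exact add_lt_add_right (sub_sq_add_add_sq_lt hα0 hα) _

theorem l2l1_robinHood_general (N : ℕ) (c : Fin N → ℝ)
    (hsum : 0 < ∑ k, c k)
    (i j : Fin N) (hij : i ≠ j)
    (α : ℝ) (hα0 : 0 < α) (hα : α < (c i - c j) / 2) :
    Real.sqrt (∑ k ∈ ({i, j}ᶜ : Finset (Fin N)), c k ^ 2
        + (c i - α) ^ 2 + (c j + α) ^ 2) / (∑ k, c k)
      < Real.sqrt (∑ k, c k ^ 2) / (∑ k, c k) := by
  have hsq := sum_sq_robinHood_lt c hij hα0 (by linarith)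
  have hnonneg : 0 ≤ ∑ k ∈ ({i, j}ᶜ : Finset (Fin N)), c k ^ 2
      + (c i - α) ^ 2 + (c j + α) ^ 2 := by positivity
  exact div_lt_div_of_pos_right (Real.sqrt_lt_sqrt hnonneg hsq) hsum

/-- The ℓ²/ℓ¹ measure satisfies D1 (Robin Hood): a Robin Hood operation strictly
decreases √(Σ cₖ²)/(Σ cₖ). -/
theorem l2l1_robinHood (N : ℕ) (c : Fin N → ℝ) (hc : ∀ k, 0 ≤ c k)
    (hsum : 0 < ∑ k, c k)
    (i j : Fin N) (hij : i ≠ j) (hgt : c j < c i)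
    (α : ℝ) (hα0 : 0 < α) (hα : α < (c i - c j) / 2) :
    Real.sqrt (∑ k ∈ ({i, j}ᶜ : Finset (Fin N)), c k ^ 2
        + (c i - α) ^ 2 + (c j + α) ^ 2) / (∑ k, c k)
      < Real.sqrt (∑ k, c k ^ 2) / (∑ k, c k) :=
  l2l1_robinHood_general N c hsum i j hij α hα0 hα
end

section
/- The kurtosis measure κ₄ satisfies D3 (Rising Tide): for every vector c = (c₁,…,c_N) of positive reals whose entries are not all equal and every α > 0, Σ_i (cᵢ + α)⁴ / (Σ_i (cᵢ + α)²)² < Σ_i cᵢ⁴ / (Σ_i cᵢ²)². -/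
open Finset

/-- The kurtosis sparsity measure κ₄(d) = (Σ dᵢ⁴)/(Σ dᵢ²)². -/
noncomputable def kappa4 {N : ℕ} (d : Fin N → ℝ) : ℝ :=
  (∑ k, d k ^ 4) / (∑ k, d k ^ 2) ^ 2

/-!
With `aₖ = cₖ + x` and `Sₚ = Σ aₖᵖ`, the derivative of `x ↦ κ₄(c + x) = S₄ / S₂²` is
`4 (S₃ S₂ - S₄ S₁) / S₂³`, and `2 (S₄ S₁ - S₃ S₂) = Σₚ Σ_q aₚ a_q (aₚ + a_q) (aₚ - a_q)²` is
positive as soon as the `aₖ` are positive and not all equal. So `κ₄(c + x)` is strictly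
decreasing for `x ≥ 0`.
-/

theorem sum_pow_three_mul_sum_sq_lt_sum_pow_four_mul_sum {ι : Type*} [Fintype ι] (a : ι → ℝ)
    (ha : ∀ k, 0 < a k) {i j : ι} (hij : a i ≠ a j) :
    (∑ k, a k ^ 3) * (∑ k, a k ^ 2) < (∑ k, a k ^ 4) * (∑ k, a k) := by
  set t : ι → ι → ℝ := fun p q => a p * a q * (a p + a q) * (a p - a q) ^ 2
  have ht_nonneg : ∀ p q, 0 ≤ t p q := fun p q => by
    have := ha p; have := ha q; positivity
  have ht_pos : 0 < t i j := by
    have := ha i; have := ha j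
    have : 0 < (a i - a j) ^ 2 := pow_two_pos_of_ne_zero (sub_ne_zero.mpr hij)
    positivity
  have hsum_pos : 0 < ∑ p, ∑ q, t p q :=
    sum_pos' (fun p _ => sum_nonneg fun q _ => ht_nonneg p q)
      ⟨i, mem_univ i, sum_pos' (fun q _ => ht_nonneg i q) ⟨j, mem_univ j, ht_pos⟩⟩
  have hsum_eq : ∑ p, ∑ q, t p q
      = 2 * ((∑ k, a k ^ 4) * (∑ k, a k) - (∑ k, a k ^ 3) * (∑ k, a k ^ 2)) := by
    have hexpand : ∀ p q, t p q = (a p ^ 4 * a q + a q ^ 4 * a p)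
        - (a p ^ 3 * a q ^ 2 + a q ^ 3 * a p ^ 2) := fun p q => by ring
    simp_rw [hexpand, sum_sub_distrib, sum_add_distrib]
    rw [sum_comm (f := fun p q => a q ^ 4 * a p), sum_comm (f := fun p q => a q ^ 3 * a p ^ 2),
      ← sum_mul_sum, ← sum_mul_sum]
    ring
  linarith

theorem hasDerivAt_sum_add_pow {ι : Type*} [Fintype ι] (c : ι → ℝ) (n : ℕ) (x : ℝ) :
    HasDerivAt (fun x => ∑ k, (c k + x) ^ n) (n * ∑ k, (c k + x) ^ (n - 1)) x := by
  rw [mul_sum]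
  exact HasDerivAt.fun_sum fun k _ => by
    simpa using ((hasDerivAt_id x).const_add (c k)).fun_pow n

theorem hasDerivAt_kappa4_add_const {N : ℕ} (c : Fin N → ℝ) (x : ℝ)
    (hx : ∑ k, (c k + x) ^ 2 ≠ 0) :
    HasDerivAt (fun x => kappa4 (fun k => c k + x))
      (4 * ((∑ k, (c k + x) ^ 3) * (∑ k, (c k + x) ^ 2)
        - (∑ k, (c k + x) ^ 4) * (∑ k, (c k + x))) / (∑ k, (c k + x) ^ 2) ^ 3) x := by
  have h := (hasDerivAt_sum_add_pow c 4 x).fun_div ((hasDerivAt_sum_add_pow c 2 x).fun_pow 2)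
    (pow_ne_zero 2 hx)
  refine h.congr_deriv ?_
  norm_num
  field_simp
  ring

theorem strictAntiOn_kappa4_add_const {N : ℕ} (c : Fin N → ℝ) (hc : ∀ k, 0 < c k)
    {i j : Fin N} (hij : c i ≠ c j) :
    StrictAntiOn (fun x => kappa4 (fun k => c k + x)) (Set.Ici 0) := by
  have hpos : ∀ x ∈ Set.Ici (0 : ℝ), ∀ k, 0 < c k + x := fun x hx k =>
    add_pos_of_pos_of_nonneg (hc k) hx
  have hS₂ : ∀ x ∈ Set.Ici (0 : ℝ), 0 < ∑ k, (c k + x) ^ 2 := fun x hx =>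
    sum_pos (fun k _ => pow_pos (hpos x hx k) 2) ⟨i, mem_univ i⟩
  have hderiv x (hx : x ∈ Set.Ici (0 : ℝ)) := hasDerivAt_kappa4_add_const c x (hS₂ x hx).ne'
  refine strictAntiOn_of_deriv_neg (convex_Ici 0)
    (fun x hx => (hderiv x hx).continuousAt.continuousWithinAt) fun x hx => ?_
  rw [interior_Ici] at hx
  have hx' : x ∈ Set.Ici (0 : ℝ) := Set.Ioi_subset_Ici_self hx
  rw [(hderiv x hx').deriv]
  have hkey := sum_pow_three_mul_sum_sq_lt_sum_pow_four_mul_sum _ (hpos x hx')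
    ((add_left_injective x).ne hij)
  have := hS₂ x hx'
  apply div_neg_of_neg_of_pos <;> [linarith; positivity]

/-- κ₄ satisfies D3 (Rising Tide): for a vector of positive reals whose entries are not
all equal, adding a constant α > 0 to every coefficient strictly decreases κ₄. -/
theorem kappa4_risingTide (N : ℕ) (c : Fin N → ℝ) (hc : ∀ k, 0 < c k)
    (hne : ∃ i j, c i ≠ c j) (α : ℝ) (hα : 0 < α) :
    kappa4 (fun k => c k + α) < kappa4 c := by
  obtain ⟨i, j, hij⟩ := hne
  simpa using strictAntiOn_kappa4_add_const c hc hij Set.self_mem_Ici hα.le hα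
end

section
/- The kurtosis measure κ₄ satisfies P1 (Bill Gates): for every vector c = (c₁,…,c_N) of positive reals with N ≥ 2 and every index i, there exists β > 0 such that for all α > 0, κ₄ of the vector obtained by replacing cᵢ with cᵢ + β + α is strictly greater than κ₄ of the vector obtained by replacing cᵢ with cᵢ + β. In particular any β with cᵢ + β > √((Σ_{j≠i} cⱼ⁴)/(Σ_{j≠i} cⱼ²)) works. -/
/-!
Replacing `cᵢ` by `t` turns `κ₄` into `t ↦ (t⁴ + A) / (t² + B)²` with `A = Σ_{j≠i} cⱼ⁴` and
`B = Σ_{j≠i} cⱼ² > 0`. As a function of `u = t²` this is `(u² + A) / (u + B)²`, whose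
derivative has the sign of `B u - A`; so `κ₄` strictly increases in `cᵢ` beyond `√(A / B)`.
-/

open Finset

theorem Fintype.sum_comp_update {ι α M : Type*} [Fintype ι] [DecidableEq ι] [AddCommMonoid M]
    (f : α → M) (c : ι → α) (i : ι) (t : α) :
    ∑ k, f (Function.update c i t k) = f t + ∑ j ∈ {i}ᶜ, f (c j) := by
  rw [Fintype.sum_eq_add_sum_compl i, Function.update_self]
  congr 1
  refine Finset.sum_congr rfl fun j hj => ?_
  rw [Function.update_of_ne (by simpa using hj)]

theorem kappa4_update {N : ℕ} (c : Fin N → ℝ) (i : Fin N) (t : ℝ) :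
    kappa4 (Function.update c i t) =
      (t ^ 4 + ∑ j ∈ {i}ᶜ, c j ^ 4) / (t ^ 2 + ∑ j ∈ {i}ᶜ, c j ^ 2) ^ 2 := by
  rw [kappa4, Fintype.sum_comp_update (· ^ 4), Fintype.sum_comp_update (· ^ 2)]

theorem strictMonoOn_sq_add_div_add_sq {A B : ℝ} (hA : 0 ≤ A) (hB : 0 < B) :
    StrictMonoOn (fun u => (u ^ 2 + A) / (u + B) ^ 2) (Set.Ici (A / B)) := by
  intro u hu v _ huv
  have hBu : A ≤ B * u := by rwa [Set.mem_Ici, div_le_iff₀ hB, mul_comm] at hu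
  have hu0 : 0 ≤ u := (div_nonneg hA hB.le).trans hu
  rw [div_lt_div_iff₀ (pow_pos (by linarith) 2) (pow_pos (by linarith) 2)]
  -- (v² + A)(u + B)² - (u² + A)(v + B)² = (v - u)((v - u)(2Bu + B² - A) + 2(Bu - A)(u + B))
  have hcofactor : 0 < (v - u) * (2 * B * u + B ^ 2 - A) + 2 * (B * u - A) * (u + B) := by
    have := mul_pos (sub_pos.2 huv) (by nlinarith : 0 < 2 * B * u + B ^ 2 - A)
    have := mul_nonneg (mul_nonneg zero_le_two (sub_nonneg.2 hBu)) (by positivity : 0 ≤ u + B)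
    linarith
  nlinarith [mul_pos (sub_pos.2 huv) hcofactor]

theorem kappa4_update_strictMonoOn {N : ℕ} (c : Fin N → ℝ) (i : Fin N)
    (hB : 0 < ∑ j ∈ {i}ᶜ, c j ^ 2) :
    StrictMonoOn (fun t => kappa4 (Function.update c i t))
      (Set.Ici √((∑ j ∈ {i}ᶜ, c j ^ 4) / ∑ j ∈ {i}ᶜ, c j ^ 2)) := by
  set A := ∑ j ∈ {i}ᶜ, c j ^ 4
  set B := ∑ j ∈ {i}ᶜ, c j ^ 2
  have hA : 0 ≤ A := Finset.sum_nonneg fun j _ => by positivity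
  have hsq : Set.MapsTo (· ^ 2) (Set.Ici √(A / B)) (Set.Ici (A / B)) := fun t ht =>
    (Real.sqrt_le_left ((Real.sqrt_nonneg _).trans ht)).1 ht
  have hsq_mono : StrictMonoOn (· ^ 2 : ℝ → ℝ) (Set.Ici √(A / B)) :=
    (pow_left_strictMonoOn₀ two_ne_zero).mono fun t ht => (Real.sqrt_nonneg _).trans ht
  convert (strictMonoOn_sq_add_div_add_sq hA hB).comp hsq_mono hsq using 1
  funext t
  rw [kappa4_update, Function.comp_apply, ← pow_mul]

/-- κ₄ satisfies P1 (Bill Gates): there exists β > 0 such that further increasing the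
i-th coefficient beyond cᵢ + β strictly increases κ₄; in particular any β > 0 with
cᵢ + β > √((Σ_{j≠i} cⱼ⁴)/(Σ_{j≠i} cⱼ²)) works. -/
theorem kappa4_billGates (N : ℕ) (hN : 2 ≤ N) (c : Fin N → ℝ)
    (hc : ∀ k, 0 < c k) (i : Fin N) :
    (∃ β > 0, ∀ α > 0,
      kappa4 (Function.update c i (c i + β + α)) >
        kappa4 (Function.update c i (c i + β))) ∧
    (∀ β > 0,
      Real.sqrt ((∑ j ∈ ({i}ᶜ : Finset (Fin N)), c j ^ 4) /
          (∑ j ∈ ({i}ᶜ : Finset (Fin N)), c j ^ 2)) < c i + β →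
      ∀ α > 0,
        kappa4 (Function.update c i (c i + β + α)) >
          kappa4 (Function.update c i (c i + β))) := by
  have hne : ({i}ᶜ : Finset (Fin N)).Nonempty := by
    rw [← Finset.card_pos, Finset.card_compl, Finset.card_singleton, Fintype.card_fin]
    omega
  have hmono := kappa4_update_strictMonoOn c i
    (Finset.sum_pos (fun j _ => pow_pos (hc j) 2) hne)
  set s := √((∑ j ∈ ({i}ᶜ : Finset (Fin N)), c j ^ 4) / ∑ j ∈ ({i}ᶜ : Finset (Fin N)), c j ^ 2)
  have hincr : ∀ β > 0, s < c i + β → ∀ α > 0,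
      kappa4 (Function.update c i (c i + β + α)) > kappa4 (Function.update c i (c i + β)) :=
    fun β _ hβ α hα => hmono hβ.le (Set.mem_Ici.2 (by linarith)) (by linarith)
  have hs : s < c i + (s + 1) := by linarith [hc i]
  exact ⟨⟨s + 1, by positivity, hincr _ (by positivity) hs⟩, hincr⟩
end

section
/- The Hoyer measure satisfies D1 (Robin Hood): for every vector c = (c₁,…,c_N) of nonnegative reals with N ≥ 2 and Σ_k cₖ² > 0, all indices i ≠ j with cᵢ > cⱼ, and every α with 0 < α < (cᵢ − cⱼ)/2, Hoyer(c') < Hoyer(c), where c' is obtained from c by replacing cᵢ with cᵢ − α and cⱼ with cⱼ + α. -/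
open Finset

/-- The Hoyer sparsity measure of a vector d of length N:
(√N − (Σ dₖ)/√(Σ dₖ²)) / (√N − 1). -/
noncomputable def hoyer {N : ℕ} (d : Fin N → ℝ) : ℝ :=
  (Real.sqrt N - (∑ k, d k) / Real.sqrt (∑ k, d k ^ 2)) / (Real.sqrt N - 1)

/-! A Robin Hood transfer leaves `∑ cₖ` unchanged and lowers `∑ cₖ²` by `2α(cᵢ - cⱼ - α) > 0`.
As the sum is positive, the ratio `(∑ cₖ) / √(∑ cₖ²)` grows, so the Hoyer measure drops
(its denominator `√N - 1` is positive for `N ≥ 2`). -/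

section Update

variable {ι R M : Type*} [Fintype ι] [DecidableEq ι] [AddCommGroup M]

theorem Fintype.sum_comp_update_s11 (φ : R → M) (f : ι → R) (t : ι) (v : R) :
    ∑ k, φ (Function.update f t v k) = ∑ k, φ (f k) + (φ v - φ (f t)) := by
  have hrest : ∑ k ∈ univ.erase t, φ (Function.update f t v k) = ∑ k ∈ univ.erase t, φ (f k) :=
    Finset.sum_congr rfl fun k hk => by rw [Function.update_of_ne (ne_of_mem_erase hk)]
  rw [← add_sum_erase _ _ (mem_univ t), ← add_sum_erase _ _ (mem_univ t), hrest,
    Function.update_self]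
  abel

theorem Fintype.sum_comp_update_update (φ : R → M) (f : ι → R) {i j : ι} (hij : i ≠ j)
    (a b : R) :
    ∑ k, φ (Function.update (Function.update f i a) j b k) =
      ∑ k, φ (f k) + (φ a - φ (f i)) + (φ b - φ (f j)) := by
  rw [Fintype.sum_comp_update_s11, Fintype.sum_comp_update_s11, Function.update_of_ne hij.symm]

end Update

section RobinHood

variable {ι R : Type*} [Fintype ι] [DecidableEq ι] [CommRing R]

theorem sum_robinHood (c : ι → R) {i j : ι} (hij : i ≠ j) (α : R) :
    ∑ k, Function.update (Function.update c i (c i - α)) j (c j + α) k = ∑ k, c k := by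
  have h := Fintype.sum_comp_update_update id c hij (c i - α) (c j + α)
  simp only [id] at h
  rw [h]
  abel

theorem sum_sq_robinHood (c : ι → R) {i j : ι} (hij : i ≠ j) (α : R) :
    ∑ k, Function.update (Function.update c i (c i - α)) j (c j + α) k ^ 2 =
      ∑ k, c k ^ 2 - 2 * α * (c i - c j - α) := by
  rw [Fintype.sum_comp_update_update (· ^ 2) c hij]
  ring

end RobinHood

theorem Finset.sum_pos_of_sum_sq_pos {ι R : Type*} [CommRing R] [LinearOrder R]
    [IsStrictOrderedRing R] {s : Finset ι} {c : ι → R} (hc : ∀ k ∈ s, 0 ≤ c k)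
    (hsq : 0 < ∑ k ∈ s, c k ^ 2) : 0 < ∑ k ∈ s, c k :=
  (sum_nonneg hc).lt_of_ne' (sq_pos_iff.mp (hsq.trans_le (sum_sq_le_sq_sum_of_nonneg hc)))

theorem hoyer_lt_hoyer_of_sum_eq {N : ℕ} (hN : 1 < N) {c d : Fin N → ℝ}
    (hsum : ∑ k, d k = ∑ k, c k) (hpos : 0 < ∑ k, c k) (hsq : ∑ k, d k ^ 2 < ∑ k, c k ^ 2) :
    hoyer d < hoyer c := by
  have hd : 0 < ∑ k, d k ^ 2 := by
    have := sq_sum_le_card_mul_sum_sq (s := univ) (f := d)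
    rw [card_univ, Fintype.card_fin, hsum] at this
    exact pos_of_mul_pos_right (lt_of_lt_of_le (by positivity) this) (Nat.cast_nonneg N)
  have hsqrtN : 1 < Real.sqrt N := by
    rw [Real.lt_sqrt zero_le_one, one_pow]
    exact_mod_cast hN
  unfold hoyer
  rw [hsum]
  gcongr

theorem hoyer_robinHood_general (N : ℕ) (hN : 2 ≤ N) (c : Fin N → ℝ)
    (hc : ∀ k, 0 ≤ c k) (hsq : 0 < ∑ k, c k ^ 2)
    (i j : Fin N) (hij : i ≠ j)
    (α : ℝ) (hα0 : 0 < α) (hα : α < (c i - c j) / 2) :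
    hoyer (Function.update (Function.update c i (c i - α)) j (c j + α)) < hoyer c := by
  have hsq_lt : ∑ k, Function.update (Function.update c i (c i - α)) j (c j + α) k ^ 2 <
      ∑ k, c k ^ 2 := by
    rw [sum_sq_robinHood c hij α]
    nlinarith
  exact hoyer_lt_hoyer_of_sum_eq hN (sum_robinHood c hij α)
    (sum_pos_of_sum_sq_pos (fun k _ => hc k) hsq) hsq_lt

/-- The Hoyer measure satisfies D1 (Robin Hood): a Robin Hood operation strictly
decreases it. -/
theorem hoyer_robinHood (N : ℕ) (hN : 2 ≤ N) (c : Fin N → ℝ)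
    (hc : ∀ k, 0 ≤ c k) (hsq : 0 < ∑ k, c k ^ 2)
    (i j : Fin N) (hij : i ≠ j) (hgt : c j < c i)
    (α : ℝ) (hα0 : 0 < α) (hα : α < (c i - c j) / 2) :
    hoyer (Function.update (Function.update c i (c i - α)) j (c j + α)) < hoyer c :=
  hoyer_robinHood_general N hN c hc hsq i j hij α hα0 hα
end

section
/- The Hoyer measure satisfies D3 (Rising Tide): for every vector c = (c₁,…,c_N) of nonnegative reals with N ≥ 2 whose entries are not all equal, and every α > 0, Hoyer(c + α) < Hoyer(c), where c + α denotes the vector with entries cₖ + α. The key fact is the strict Cauchy–Schwarz inequality (Σ_k cₖ)² < N Σ_k cₖ² when the entries are not all equal. -/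
open Finset

/-!
The ratio `(Σ dₖ)/√(Σ dₖ²)` only depends on `s = Σ dₖ` and on the Cauchy–Schwarz gap
`D = N Σ dₖ² − (Σ dₖ)²`: it equals `√N · s/√(s² + D)`. Adding `α` to every entry leaves `D`
unchanged and raises `s` by `Nα`. When the entries are not all equal, `D > 0` and
`s ↦ s/√(s² + D)` is strictly increasing, so the ratio increases and the Hoyer measure decreases.
-/

theorem Finset.sum_sum_sub_sq {ι R : Type*} [CommRing R] (s : Finset ι) (f : ι → R) :
    ∑ i ∈ s, ∑ j ∈ s, (f i - f j) ^ 2 = 2 * (#s * ∑ i ∈ s, f i ^ 2 - (∑ i ∈ s, f i) ^ 2) := by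
  simp only [sub_sq, sum_add_distrib, sum_sub_distrib, ← mul_sum, ← sum_mul, sum_const,
    nsmul_eq_mul]
  ring

section CauchySchwarzGap

variable {ι : Type*} [Fintype ι]

noncomputable def cauchySchwarzGap (f : ι → ℝ) : ℝ :=
  Fintype.card ι * ∑ i, f i ^ 2 - (∑ i, f i) ^ 2

theorem cauchySchwarzGap_pos {f : ι → ℝ} (hf : ∃ i j, f i ≠ f j) : 0 < cauchySchwarzGap f := by
  obtain ⟨i, j, hij⟩ := hf
  have hpos : 0 < ∑ i, ∑ j, (f i - f j) ^ 2 :=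
    sum_pos' (fun _ _ ↦ sum_nonneg fun _ _ ↦ sq_nonneg _)
      ⟨i, mem_univ i, sum_pos' (fun _ _ ↦ sq_nonneg _)
        ⟨j, mem_univ j, sq_pos_of_ne_zero (sub_ne_zero.2 hij)⟩⟩
  rw [sum_sum_sub_sq, card_univ] at hpos
  exact pos_of_mul_pos_right hpos zero_le_two

theorem sum_add_const (f : ι → ℝ) (a : ℝ) :
    ∑ i, (f i + a) = ∑ i, f i + Fintype.card ι * a := by
  rw [sum_add_distrib, sum_const, card_univ, nsmul_eq_mul]

theorem cauchySchwarzGap_add_const (f : ι → ℝ) (a : ℝ) :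
    cauchySchwarzGap (fun i ↦ f i + a) = cauchySchwarzGap f := by
  simp only [cauchySchwarzGap, add_sq, sum_add_distrib, ← sum_mul, ← mul_sum, sum_const,
    card_univ, nsmul_eq_mul]
  ring

theorem sum_div_sqrt_sum_sq_eq (f : ι → ℝ) :
    (∑ i, f i) / √(∑ i, f i ^ 2) =
      √(Fintype.card ι) * ((∑ i, f i) / √((∑ i, f i) ^ 2 + cauchySchwarzGap f)) := by
  rcases isEmpty_or_nonempty ι with _ | _
  · simp
  rw [cauchySchwarzGap, add_sub_cancel, Real.sqrt_mul (Nat.cast_nonneg _), ← mul_div_assoc,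
    mul_div_mul_left]
  exact (Real.sqrt_pos.2 (Nat.cast_pos.2 Fintype.card_pos)).ne'

end CauchySchwarzGap

theorem strictMono_div_sqrt_sq_add {D : ℝ} (hD : 0 < D) :
    StrictMono fun s : ℝ ↦ s / √(s ^ 2 + D) := by
  intro s t hst
  set a := √(s ^ 2 + D)
  set b := √(t ^ 2 + D)
  have hsa : |s| < a := (Real.lt_sqrt (abs_nonneg s)).2 (by rw [sq_abs]; linarith)
  have htb : |t| < b := (Real.lt_sqrt (abs_nonneg t)).2 (by rw [sq_abs]; linarith)
  have ha2 : a ^ 2 = s ^ 2 + D := Real.sq_sqrt (by positivity)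
  have hb2 : b ^ 2 = t ^ 2 + D := Real.sq_sqrt (by positivity)
  have hP : 0 < a * b + s * t := by
    have := mul_lt_mul'' hsa htb (abs_nonneg s) (abs_nonneg t)
    linarith [neg_abs_le (s * t), abs_mul s t]
  -- `(ta - sb)(ab + st) = D(tb - sa)` and `(ta - sb) + (tb - sa) = (t - s)(a + b)`
  have key : (t * a - s * b) * (a * b + s * t + D) = D * (t - s) * (a + b) := by
    linear_combination (t * b) * ha2 - (s * a) * hb2
  have hprod : 0 < (t * a - s * b) * (a * b + s * t + D) := by
    rw [key]
    have := sub_pos.2 hst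
    positivity
  show s / a < t / b
  rw [div_lt_div_iff₀ (by positivity) (by positivity)]
  linarith [pos_of_mul_pos_left hprod (by positivity)]

theorem hoyer_risingTide_general (N : ℕ) (c : Fin N → ℝ)
    (hne : ∃ i j, c i ≠ c j)
    (α : ℝ) (hα : 0 < α) :
    hoyer (fun k => c k + α) < hoyer c := by
  have hN : 1 < (N : ℝ) := by
    obtain ⟨i, j, hij⟩ := hne
    exact_mod_cast Fintype.card_fin N ▸ Fintype.one_lt_card_iff.2 ⟨i, j, ne_of_apply_ne c hij⟩
  have hratio : (∑ k, c k) / √(∑ k, c k ^ 2) < (∑ k, (c k + α)) / √(∑ k, (c k + α) ^ 2) := by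
    rw [sum_div_sqrt_sum_sq_eq, sum_div_sqrt_sum_sq_eq, cauchySchwarzGap_add_const, sum_add_const,
      Fintype.card_fin]
    refine mul_lt_mul_of_pos_left ?_ (Real.sqrt_pos.2 (by linarith))
    refine strictMono_div_sqrt_sq_add (cauchySchwarzGap_pos hne) ?_
    linarith [mul_pos (zero_lt_one.trans hN) hα]
  have hsqrtN : 1 < √(N : ℝ) := by simpa using Real.sqrt_lt_sqrt zero_le_one hN
  unfold hoyer
  gcongr

/-- The Hoyer measure satisfies D3 (Rising Tide): for a vector of nonnegative reals
(N ≥ 2) whose entries are not all equal, adding a constant α > 0 to every coefficient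
strictly decreases the Hoyer measure. -/
theorem hoyer_risingTide (N : ℕ) (hN : 2 ≤ N) (c : Fin N → ℝ)
    (hc : ∀ k, 0 ≤ c k) (hne : ∃ i j, c i ≠ c j)
    (α : ℝ) (hα : 0 < α) :
    hoyer (fun k => c k + α) < hoyer c :=
  hoyer_risingTide_general N c hne α hα
end

section
/- The Gini Index satisfies D1 (Robin Hood): for every vector c = (c₁,…,c_N) of nonnegative reals with Σ_k cₖ > 0, all indices i ≠ j with cᵢ > cⱼ, and every α with 0 < α < (cᵢ − cⱼ)/2, G(c') < G(c), where c' is obtained from c by replacing cᵢ with cᵢ − α and cⱼ with cⱼ + α. -/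
/-!
Writing `P(c) = Σ_{a,b} min(c_a, c_b)` (over ordered pairs of positions), a sorted list
`c₍₁₎ ≤ ⋯ ≤ c₍N₎` has `P(c) = Σ_k (2(N − k) + 1) c₍ₖ₎`, since `c₍ₖ₎` is the minimum of exactly
`2(N − k) + 1` pairs; hence `G(c) = 1 − P(c) / (N ‖c‖₁)`. A Robin Hood transfer keeps `N` and
`‖c‖₁`, raises `min(cᵢ, cⱼ)` by `α`, and does not decrease `min(cᵢ, z) + min(cⱼ, z)` for any
other entry `z`, so it strictly increases `P`.
-/

open Finset

/-- The Gini Index of a list of nonnegative reals: sort the entries ascendingly as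
c₍₁₎ ≤ ⋯ ≤ c₍N₎ and set G(c) = 1 − 2 Σ_{k=1}^N (c₍ₖ₎/‖c‖₁)·((N − k + 1/2)/N).
Below the sum runs over 0-indexed k, so the weight is ((N − k − 1/2)/N). -/
noncomputable def gini (l : List ℝ) : ℝ :=
  1 - 2 * ∑ k ∈ Finset.range l.length,
      ((Multiset.sort (l : Multiset ℝ) (· ≤ ·)).getD k 0 / l.sum) *
        (((l.length : ℝ) - k - 1 / 2) / l.length)

theorem List.coe_set_eq_cons_erase {α : Type*} [DecidableEq α] (l : List α) {n : ℕ}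
    (h : n < l.length) (a : α) :
    (l.set n a : Multiset α) = a ::ₘ (l : Multiset α).erase l[n] := by
  have hl : (l : Multiset α) = l[n] ::ₘ (l.eraseIdx n : Multiset α) :=
    (Multiset.coe_eq_coe.mpr (List.getElem_cons_eraseIdx_perm h)).symm
  rw [Multiset.coe_eq_coe.mpr (List.set_perm_cons_eraseIdx h a), hl, Multiset.erase_cons_head]
  rfl

theorem List.coe_set_set {α : Type*} [DecidableEq α] (l : List α) {i j : Fin l.length}
    (hij : i ≠ j) (a b : α) (ha : a ≠ l.get j) :
    ((l.set i a).set j b : Multiset α)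
      = a ::ₘ b ::ₘ ((l : Multiset α).erase (l.get i)).erase (l.get j) := by
  simp only [List.get_eq_getElem] at ha ⊢
  rw [coe_set_eq_cons_erase _ (by simp), getElem_set_ne (Fin.val_ne_of_ne hij),
    coe_set_eq_cons_erase _ i.isLt, Multiset.erase_cons_tail _ ha, Multiset.cons_swap]

noncomputable def pairMinSum (s : Multiset ℝ) : ℝ :=
  (s.map fun x => (s.map (min x)).sum).sum

theorem pairMinSum_cons (x : ℝ) (s : Multiset ℝ) :
    pairMinSum (x ::ₘ s) = x + 2 * (s.map (min x)).sum + pairMinSum s := by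
  simp only [pairMinSum, Multiset.map_cons, Multiset.sum_cons, min_self,
    Multiset.sum_map_add, min_comm _ x]
  ring

theorem sum_getD_mul_eq_pairMinSum_of_pairwise (s : List ℝ) (hs : s.Pairwise (· ≤ ·)) :
    ∑ k ∈ range s.length, s.getD k 0 * (2 * ((s.length : ℝ) - k) - 1) = pairMinSum s := by
  induction s with
  | nil => simp [pairMinSum]
  | cons x t ih =>
    obtain ⟨hx, ht⟩ := List.pairwise_cons.mp hs
    have hmin : ((t : Multiset ℝ).map (min x)).sum = t.length * x := by
      rw [Multiset.map_congr rfl fun y hy => min_eq_left (hx y hy)]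
      simp
    rw [← Multiset.cons_coe, pairMinSum_cons, hmin, ← ih ht, List.length_cons, sum_range_succ']
    have hterm : ∀ k ∈ range t.length, (x :: t).getD (k + 1) 0 * (2 * (((t.length + 1 : ℕ) : ℝ)
        - (k + 1 : ℕ)) - 1) = t.getD k 0 * (2 * ((t.length : ℝ) - k) - 1) := fun k _ => by
      rw [List.getD_cons_succ]; push_cast; ring
    rw [sum_congr rfl hterm]
    simp only [List.getD_cons_zero]
    push_cast
    ring

-- Both sides are `1` when `l.sum = 0`, since `x / 0 = 0`.
theorem gini_eq_one_sub_pairMinSum (l : List ℝ) :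
    gini l = 1 - pairMinSum l / (l.sum * l.length) := by
  set s := Multiset.sort (l : Multiset ℝ) (· ≤ ·)
  have hs : (s : Multiset ℝ) = l := Multiset.sort_eq _ _
  have hlen : s.length = l.length := by rw [Multiset.length_sort, Multiset.coe_card]
  rw [gini]
  conv_rhs => rw [← hs, ← sum_getD_mul_eq_pairMinSum_of_pairwise s (Multiset.pairwise_sort _ _),
    hlen, Finset.sum_div]
  rw [Finset.mul_sum]
  congr 1
  exact Finset.sum_congr rfl fun k _ => by ring

theorem min_add_min_le_min_sub_add_min_add (x y z : ℝ) {α : ℝ} (hα : 0 ≤ α)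
    (h : y + α ≤ x - α) : min x z + min y z ≤ min (x - α) z + min (y + α) z := by
  rcases le_total x z with hx | hx <;> rcases le_total y z with hy | hy <;>
  rcases le_total (x - α) z with hx' | hx' <;> rcases le_total (y + α) z with hy' | hy' <;>
  simp only [min_eq_left, min_eq_right, *] <;> linarith

theorem pairMinSum_lt_robinHood (r : Multiset ℝ) {x y α : ℝ} (hα : 0 < α)
    (h : y + α ≤ x - α) :
    pairMinSum (x ::ₘ y ::ₘ r) < pairMinSum ((x - α) ::ₘ (y + α) ::ₘ r) := by
  have hz : (r.map fun z => min x z + min y z).sum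
      ≤ (r.map fun z => min (x - α) z + min (y + α) z).sum :=
    Multiset.sum_map_le_sum_map _ _ fun z _ => min_add_min_le_min_sub_add_min_add x y z hα.le h
  simp only [pairMinSum_cons, Multiset.map_cons, Multiset.sum_cons, Multiset.sum_map_add] at hz ⊢
  rw [min_eq_right (by linarith : y ≤ x), min_eq_right h]
  linarith

theorem gini_robinHood_general (c : List ℝ) (hsum : 0 < c.sum)
    (i j : Fin c.length) (hij : i ≠ j)
    (α : ℝ) (hα0 : 0 < α) (hα : α < (c.get i - c.get j) / 2) :
    gini ((c.set i (c.get i - α)).set j (c.get j + α)) < gini c := by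
  have hord : c.get j + α ≤ c.get i - α := by linarith
  have hc := List.coe_set_set c hij (c.get i) (c.get j) (by linarith : c.get j < c.get i).ne'
  have hc' := List.coe_set_set c hij (c.get i - α) (c.get j + α) (by linarith)
  have hset_self : ∀ k : Fin c.length, c.set k (c.get k) = c := fun k =>
    List.set_getElem_self k.isLt
  rw [hset_self, hset_self] at hc
  set r := ((c : Multiset ℝ).erase (c.get i)).erase (c.get j)
  have hsum' : ((c.set i (c.get i - α)).set j (c.get j + α)).sum = c.sum := by
    rw [← Multiset.sum_coe, hc', ← Multiset.sum_coe c, hc]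
    simp only [Multiset.sum_cons]
    ring
  have hN : (0 : ℝ) < c.length := by exact_mod_cast i.pos
  rw [gini_eq_one_sub_pairMinSum, gini_eq_one_sub_pairMinSum, hsum', List.length_set,
    List.length_set, hc, hc']
  exact sub_lt_sub_left (div_lt_div_of_pos_right (pairMinSum_lt_robinHood _ hα0 hord)
    (by positivity)) 1

/-- The Gini Index satisfies D1 (Robin Hood): a Robin Hood operation strictly
decreases it. -/
theorem gini_robinHood (c : List ℝ) (hc : ∀ x ∈ c, 0 ≤ x) (hsum : 0 < c.sum)
    (i j : Fin c.length) (hij : i ≠ j) (hgt : c.get j < c.get i)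
    (α : ℝ) (hα0 : 0 < α) (hα : α < (c.get i - c.get j) / 2) :
    gini ((c.set i (c.get i - α)).set j (c.get j + α)) < gini c :=
  gini_robinHood_general c hsum i j hij α hα0 hα
end

section
/- The Gini Index satisfies D3 (Rising Tide): for every vector c = (c₁,…,c_N) of nonnegative reals with N ≥ 2 whose entries are not all equal, and every α > 0, G(c + α) < G(c), where c + α denotes the vector with entries cₖ + α. -/
/-! Write `G(c) = 1 - 2 T / S` with `S = ‖c‖₁` and `T = ∑ₖ c₍ₖ₎ wₖ`. The weights `wₖ` sum to
`N / 2`, so adding `α` to every entry replaces `T / S` by the mediant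
`(T + α N / 2) / (S + α N)`, which exceeds `T / S` exactly when `T / S < 1 / 2`. That inequality
is the strict Chebyshev sum inequality for the increasing `c₍ₖ₎` against the decreasing `wₖ`,
strict because the entries are not all equal. -/

open Finset


theorem List.sum_range_getD {M : Type*} [AddCommMonoid M] (l : List M) (d : M) :
    ∑ k ∈ Finset.range l.length, l.getD k d = l.sum := by
  rw [sum_range]
  simp [Fin.sum_univ_getElem]

theorem List.SortedLE.monotoneOn_getD {α : Type*} [Preorder α] {l : List α} (hl : l.SortedLE)
    (d : α) : MonotoneOn (l.getD · d) (Finset.range l.length) := by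
  intro i hi j hj hij
  simp only [coe_range, Set.mem_Iio] at hi hj
  simp only [List.getD_eq_getElem _ _ hi, List.getD_eq_getElem _ _ hj]
  exact hl.getElem_le_getElem_of_le hij

theorem List.sum_pos_of_nonneg_of_exists_ne {M : Type*} [AddCommMonoid M] [PartialOrder M]
    [IsOrderedAddMonoid M] {l : List M} (hl : ∀ x ∈ l, 0 ≤ x) (h : ∃ x ∈ l, ∃ y ∈ l, x ≠ y) :
    0 < l.sum := by
  obtain ⟨x, hx, y, hy, hxy⟩ := h
  have hpos : ∃ z ∈ l, 0 < z := by
    by_contra! hnpos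
    have hzero : ∀ z ∈ l, z = 0 := fun z hz => ((hl z hz).eq_of_not_lt (hnpos z hz)).symm
    exact hxy ((hzero x hx).trans (hzero y hy).symm)
  obtain ⟨z, hz, hz0⟩ := hpos
  exact hz0.trans_le (List.single_le_sum hl z hz)

theorem List.sum_map_add_const {M : Type*} [AddCommMonoid M] (l : List M) (a : M) :
    (l.map (· + a)).sum = l.sum + l.length • a := by
  simp [List.sum_map_add]

theorem Multiset.sort_map_add_const {α : Type*} [AddCommMonoid α] [LinearOrder α]
    [IsOrderedCancelAddMonoid α] (s : Multiset α) (a : α) :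
    (s.map (· + a)).sort (· ≤ ·) = (s.sort (· ≤ ·)).map (· + a) :=
  (Multiset.map_sort (· + a) s _ _ fun _ _ _ _ => (add_le_add_iff_right a).symm).symm

noncomputable def giniWeight (N k : ℕ) : ℝ := ((N : ℝ) - k - 1 / 2) / N

theorem sum_giniWeight (N : ℕ) : ∑ k ∈ range N, giniWeight N k = N / 2 := by
  rcases N.eq_zero_or_pos with rfl | hN
  · simp
  have hgauss : ∑ k ∈ range N, (k : ℝ) = N * (N - 1) / 2 := by
    have h := congrArg (Nat.cast : ℕ → ℝ) (sum_range_id_mul_two N)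
    push_cast [Nat.cast_sub hN] at h
    linarith
  simp only [giniWeight, ← sum_div, sum_sub_distrib, sum_const, card_range, nsmul_eq_mul, hgauss]
  field_simp
  ring

theorem giniWeight_strictAnti {N : ℕ} (hN : 0 < N) : StrictAnti (giniWeight N) := by
  intro i j hij
  unfold giniWeight
  gcongr

section Chebyshev

variable {ι R : Type*}

theorem Finset.sum_sum_sub_mul_sub [CommRing R] (s : Finset ι) (f g : ι → R) :
    ∑ i ∈ s, ∑ j ∈ s, (f i - f j) * (g i - g j)
      = 2 * (#s * ∑ i ∈ s, f i * g i - (∑ i ∈ s, f i) * ∑ i ∈ s, g i) := by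
  simp only [mul_sub, sub_mul, sum_sub_distrib, ← sum_mul, ← mul_sum, sum_const, nsmul_eq_mul,
    mul_assoc]
  ring

theorem AntivaryOn.card_mul_sum_lt_sum_mul_sum [CommRing R] [LinearOrder R]
    [IsStrictOrderedRing R] {s : Finset ι} {f g : ι → R} (hfg : AntivaryOn f g s) {i j : ι}
    (hi : i ∈ s) (hj : j ∈ s) (hf : f i < f j) (hg : g j < g i) :
    #s * ∑ k ∈ s, f k * g k < (∑ k ∈ s, f k) * ∑ k ∈ s, g k := by
  have hneg : ∑ a ∈ s, ∑ b ∈ s, (f a - f b) * (g a - g b) < 0 := by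
    refine sum_neg' (fun a ha => sum_nonpos fun b hb => hfg.sub_mul_sub_nonpos hb ha) ⟨i, hi, ?_⟩
    refine sum_neg' (fun b hb => hfg.sub_mul_sub_nonpos hb hi) ⟨j, hj, ?_⟩
    exact mul_neg_of_neg_of_pos (sub_neg.2 hf) (sub_pos.2 hg)
  rw [sum_sum_sub_mul_sub] at hneg
  linarith

end Chebyshev

noncomputable def giniWeightedSum (l : List ℝ) : ℝ :=
  ∑ k ∈ range l.length, (Multiset.sort (l : Multiset ℝ) (· ≤ ·)).getD k 0 * giniWeight l.length k

theorem gini_eq (l : List ℝ) : gini l = 1 - 2 * (giniWeightedSum l / l.sum) := by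
  rw [gini, giniWeightedSum, sum_div]
  congr 2
  refine sum_congr rfl fun k _ => ?_
  rw [giniWeight]
  ring

theorem giniWeightedSum_map_add (l : List ℝ) (a : ℝ) :
    giniWeightedSum (l.map (· + a)) = giniWeightedSum l + a * l.length / 2 := by
  set s := Multiset.sort (l : Multiset ℝ) (· ≤ ·)
  have hs : s.length = l.length := Multiset.length_sort _
  rw [giniWeightedSum, giniWeightedSum, ← Multiset.map_coe, Multiset.sort_map_add_const,
    List.length_map, mul_div_assoc, ← sum_giniWeight, mul_sum, ← sum_add_distrib]
  refine sum_congr rfl fun k hk => ?_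
  have hk : k < s.length := hs ▸ mem_range.1 hk
  rw [List.getD_eq_getElem _ _ (by rw [List.length_map]; exact hk), List.getD_eq_getElem _ _ hk,
    List.getElem_map]
  ring

theorem giniWeightedSum_lt_half_sum {l : List ℝ} (h : ∃ x ∈ l, ∃ y ∈ l, x ≠ y) :
    giniWeightedSum l < l.sum / 2 := by
  obtain ⟨x, hx, y, hy, hxy⟩ := h
  set s := Multiset.sort (l : Multiset ℝ) (· ≤ ·)
  set N := l.length
  have hs : s.length = N := Multiset.length_sort _
  have hN : 0 < N := List.length_pos_of_mem hx
  have hmono : MonotoneOn (s.getD · 0) (range N) :=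
    hs ▸ (Multiset.pairwise_sort _ _).sortedLE.monotoneOn_getD 0
  have hsum : ∑ k ∈ range N, s.getD k 0 = l.sum := by
    rw [← hs, List.sum_range_getD, ← Multiset.sum_coe, Multiset.sort_eq, Multiset.sum_coe]
  obtain ⟨i, hi, j, hj, hlt⟩ : ∃ i ∈ range N, ∃ j ∈ range N, s.getD i 0 < s.getD j 0 := by
    have hmem : ∀ z ∈ l, ∃ k ∈ range N, s.getD k 0 = z := fun z hz => by
      have hzs : z ∈ s := (Multiset.mem_sort (· ≤ ·)).2 (Multiset.mem_coe.2 hz)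
      obtain ⟨k, hk, rfl⟩ := List.mem_iff_getElem.1 hzs
      exact ⟨k, mem_range.2 (hs ▸ hk), List.getD_eq_getElem _ _ hk⟩
    obtain ⟨i, hi, rfl⟩ := hmem x hx
    obtain ⟨j, hj, rfl⟩ := hmem y hy
    rcases hxy.lt_or_gt with hlt | hlt
    exacts [⟨i, hi, j, hj, hlt⟩, ⟨j, hj, i, hi, hlt⟩]
  have hij : i < j := hmono.reflect_lt hi hj hlt
  have hcheb := (hmono.antivaryOn ((giniWeight_strictAnti hN).antitone.antitoneOn _))
    |>.card_mul_sum_lt_sum_mul_sum hi hj hlt (giniWeight_strictAnti hN hij)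
  rw [card_range, hsum, sum_giniWeight] at hcheb
  have hN' : (0 : ℝ) < N := by exact_mod_cast hN
  rw [giniWeightedSum]
  nlinarith

theorem gini_risingTide_general (c : List ℝ) (hc : ∀ x ∈ c, 0 ≤ x)
    (hne : ∃ x ∈ c, ∃ y ∈ c, x ≠ y)
    (α : ℝ) (hα : 0 < α) :
    gini (c.map (fun x => x + α)) < gini c := by
  have hS : 0 < c.sum := List.sum_pos_of_nonneg_of_exists_ne hc hne
  have hN : (0 : ℝ) < c.length := by
    obtain ⟨x, hx, -⟩ := hne
    exact_mod_cast List.length_pos_of_mem hx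
  have hT := giniWeightedSum_lt_half_sum hne
  rw [gini_eq, gini_eq, giniWeightedSum_map_add, List.sum_map_add_const, nsmul_eq_mul]
  have hmediant : giniWeightedSum c / c.sum
      < (giniWeightedSum c + α * c.length / 2) / (c.sum + c.length * α) := by
    rw [div_lt_div_iff₀ hS (by positivity)]
    nlinarith [mul_pos (mul_pos hα hN) (sub_pos.2 hT)]
  linarith

/-- The Gini Index satisfies D3 (Rising Tide): for a vector of nonnegative reals
(N ≥ 2) whose entries are not all equal, adding a constant α > 0 to every coefficient
strictly decreases the Gini Index. -/
theorem gini_risingTide (c : List ℝ) (hc : ∀ x ∈ c, 0 ≤ x) (hlen : 2 ≤ c.length)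
    (hne : ∃ x ∈ c, ∃ y ∈ c, x ≠ y)
    (α : ℝ) (hα : 0 < α) :
    gini (c.map (fun x => x + α)) < gini c :=
  gini_risingTide_general c hc hne α hα
end

section
/- The Gini Index satisfies D4 (Cloning): for every vector c = (c₁,…,c_N) of nonnegative reals with Σ_k cₖ > 0 and every integer m ≥ 1, G(c‖c‖⋯‖c) = G(c), where c‖c‖⋯‖c denotes the concatenation of m copies of c (a vector of length mN). -/
/-!
Sorting the `m`-fold concatenation of `c` repeats each sorted entry `c₍ₖ₎` exactly `m` times in a
row, and the total mass is multiplied by `m`. In the Gini sum the weight `(N - k - 1/2)/N` is the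
value of `1 - t` at the midpoint of the cell `[k/N, (k+1)/N]`; the `m` copies of `c₍ₖ₎` occupy the
`m` subcells of that cell, whose midpoints average to the midpoint of the cell, so the `m` cloned
summands add up to the original one.
-/

open Finset

namespace List

variable {α : Type*}

theorem coe_flatten_replicate (m : ℕ) (l : List α) :
    ((replicate m l).flatten : Multiset α) = m • (l : Multiset α) := by
  induction m with
  | zero => simp
  | succ m ih => rw [replicate_succ, flatten_cons, ← Multiset.coe_add, ih, succ_nsmul, add_comm]

theorem coe_flatMap_replicate (m : ℕ) (l : List α) :
    (l.flatMap (replicate m) : Multiset α) = m • (l : Multiset α) := by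
  induction l with
  | nil => simp
  | cons a l ih =>
    rw [flatMap_cons, ← Multiset.coe_add, ih, ← Multiset.cons_coe, ← Multiset.singleton_add,
      smul_add, Multiset.nsmul_singleton, Multiset.coe_replicate]

theorem Pairwise.flatMap_replicate {R : α → α → Prop} [Std.Refl R] {l : List α}
    (hl : l.Pairwise R) (m : ℕ) : (l.flatMap (replicate m)).Pairwise R := by
  refine pairwise_flatMap.2 ⟨fun a _ => pairwise_replicate.2 (.inr (refl a)), ?_⟩
  refine hl.imp fun hab x hx y hy => ?_
  rwa [eq_of_mem_replicate hx, eq_of_mem_replicate hy]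

theorem getD_flatMap_replicate {m r : ℕ} (hr : r < m) (l : List α) (k : ℕ) (d : α) :
    (l.flatMap (replicate m)).getD (m * k + r) d = l.getD k d := by
  induction l generalizing k with
  | nil => simp
  | cons a l ih =>
    rw [flatMap_cons]
    cases k with
    | zero =>
      rw [Nat.mul_zero, Nat.zero_add, getD_append _ _ _ _ (by simpa using hr)]
      simp [hr]
    | succ k =>
      rw [getD_append_right _ _ _ _ (by simp [Nat.mul_succ]; omega), length_replicate,
        show m * (k + 1) + r - m = m * k + r by rw [Nat.mul_succ]; omega, ih, getD_cons_succ]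

end List

theorem Multiset.sort_nsmul {α : Type*} [LinearOrder α] (m : ℕ) (s : Multiset α) :
    (m • s).sort (· ≤ ·) = (s.sort (· ≤ ·)).flatMap (List.replicate m) := by
  refine List.Perm.eq_of_pairwise' (pairwise_sort _ _)
    ((pairwise_sort _ _).flatMap_replicate m) ?_
  rw [← coe_eq_coe, sort_eq, List.coe_flatMap_replicate, sort_eq]

theorem Finset.sum_range_mul {M : Type*} [AddCommMonoid M] (f : ℕ → M) (m n : ℕ) :
    ∑ j ∈ range (m * n), f j = ∑ k ∈ range n, ∑ r ∈ range m, f (m * k + r) := by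
  induction n with
  | zero => simp
  | succ n ih => rw [Nat.mul_succ, sum_range_add, ih, sum_range_succ]

theorem Finset.sum_range_sub_sub_half (a : ℝ) (m : ℕ) :
    ∑ r ∈ range m, (a - r - 1 / 2) = m * (a - m / 2) := by
  induction m with
  | zero => simp
  | succ m ih => rw [sum_range_succ, ih]; push_cast; ring

theorem sum_gini_summand_clones (x S : ℝ) {m : ℕ} (hm : m ≠ 0) (n k : ℕ) :
    ∑ r ∈ range m, x / (m * S) * ((((m * n : ℕ) : ℝ) - (m * k + r : ℕ) - 1 / 2) / (m * n : ℕ))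
      = x / S * ((n - k - 1 / 2) / n) := by
  have hm' : (m : ℝ) ≠ 0 := Nat.cast_ne_zero.2 hm
  simp only [← Finset.sum_div, ← Finset.mul_sum]
  push_cast
  simp only [sub_add_eq_sub_sub, sum_range_sub_sub_half]
  field_simp

theorem gini_cloning_general (c : List ℝ) (m : ℕ) (hm : 1 ≤ m) :
    gini (List.flatten (List.replicate m c)) = gini c := by
  unfold gini
  simp only [List.coe_flatten_replicate, Multiset.sort_nsmul, List.length_flatten,
    List.sum_flatten, List.map_replicate, List.sum_replicate, smul_eq_mul, nsmul_eq_mul,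
    Finset.sum_range_mul]
  congr 2
  refine sum_congr rfl fun k _ => ?_
  rw [← sum_gini_summand_clones _ _ (by omega : m ≠ 0)]
  refine sum_congr rfl fun r hr => ?_
  rw [List.getD_flatMap_replicate (mem_range.1 hr)]

/-- The Gini Index satisfies D4 (Cloning): concatenating m ≥ 1 copies of the vector
leaves the Gini Index unchanged. -/
theorem gini_cloning (c : List ℝ) (hc : ∀ x ∈ c, 0 ≤ x) (hsum : 0 < c.sum)
    (m : ℕ) (hm : 1 ≤ m) :
    gini (List.flatten (List.replicate m c)) = gini c :=
  gini_cloning_general c m hm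
end
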